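/- arXiv:2405.09338 — 4 statements merged into one kernel-verified Lean document; each statement's English description precedes it below -/
import Mathlib

section
/- Let S be a finite set of closed unit-length intervals, let D be the number of distinct integers r such that some interval of S has left endpoint in [r, r+1), and let OPT be a maximum pairwise disjoint subset of S. Then D/2 ≤ |OPT| ≤ D. -/
/-!
Disjoint unit intervals have distinct left-endpoint floors, which gives `|OPT| ≤ D`. Conversely,
two intervals whose left-endpoint floors are distinct integers of the same parity are more than
one apart, hence disjoint; picking one interval of `S` for each floor of the more frequent parity
gives a disjoint family of size at least `D / 2`.
-/

open Finset Set

def UnitIntervalsDisjoint (T : Finset ℝ) : Prop :=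
  ∀ x ∈ T, ∀ y ∈ T, x ≠ y → Icc x (x + 1) ∩ Icc y (y + 1) = ∅

theorem Icc_inter_Icc_add_one_eq_empty_iff {x y : ℝ} :
    Icc x (x + 1) ∩ Icc y (y + 1) = ∅ ↔ 1 < |x - y| := by
  rw [Set.Icc_inter_Icc, Set.Icc_eq_empty_iff, lt_abs, max_le_iff, le_min_iff, le_min_iff]
  constructor
  · intro h
    by_contra! h'
    exact h ⟨⟨by linarith, by linarith⟩, by linarith, by linarith⟩
  · rintro (h | h) ⟨⟨_, _⟩, _, _⟩ <;> linarith

theorem UnitIntervalsDisjoint.injOn_floor {T : Finset ℝ} (hT : UnitIntervalsDisjoint T) :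
    InjOn Int.floor (T : Set ℝ) := by
  intro x hx y hy hxy
  by_contra hne
  have := Icc_inter_Icc_add_one_eq_empty_iff.mp (hT x hx y hy hne)
  exact this.not_gt (Int.abs_sub_lt_one_of_floor_eq_floor hxy)

theorem UnitIntervalsDisjoint.card_le_card_image_floor {S T : Finset ℝ} (hTS : T ⊆ S)
    (hT : UnitIntervalsDisjoint T) : T.card ≤ (S.image Int.floor).card := by
  rw [← card_image_of_injOn hT.injOn_floor]
  exact card_le_card (image_subset_image hTS)

theorem add_one_lt_of_floor_add_two_le {x y : ℝ} (h : ⌊x⌋ + 2 ≤ ⌊y⌋) : x + 1 < y := by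
  have hx := Int.lt_floor_add_one x
  have hy := Int.floor_le y
  have h' : (⌊x⌋ : ℝ) + 2 ≤ ⌊y⌋ := by exact_mod_cast h
  linarith

theorem exists_unitIntervalsDisjoint_card_eq {S : Finset ℝ} {A : Finset ℤ}
    (hAS : A ⊆ S.image Int.floor) (hA : ∀ r ∈ A, ∀ s ∈ A, r % 2 = s % 2) :
    ∃ T ⊆ S, UnitIntervalsDisjoint T ∧ T.card = A.card := by
  have hsurj : SurjOn Int.floor (S : Set ℝ) (A : Set ℤ) := by
    simpa [SurjOn, ← coe_image] using hAS
  obtain ⟨T, hTS, hinj, rfl⟩ := exists_subset_injOn_image_eq_of_surjOn _ _ hsurj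
  refine ⟨T, by exact_mod_cast hTS, fun x hx y hy hxy => ?_, (card_image_of_injOn hinj).symm⟩
  have hne : ⌊x⌋ ≠ ⌊y⌋ := fun h => hxy (hinj hx hy h)
  have hpar := hA _ (mem_image_of_mem _ hx) _ (mem_image_of_mem _ hy)
  rw [Icc_inter_Icc_add_one_eq_empty_iff, lt_abs]
  rcases (by omega : ⌊y⌋ + 2 ≤ ⌊x⌋ ∨ ⌊x⌋ + 2 ≤ ⌊y⌋) with h | h
  · left; linarith [add_one_lt_of_floor_add_two_le h]
  · right; linarith [add_one_lt_of_floor_add_two_le h]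

theorem Finset.exists_subset_mod_two_eq_card_le_two_mul (R : Finset ℤ) :
    ∃ A ⊆ R, (∀ r ∈ A, ∀ s ∈ A, r % 2 = s % 2) ∧ R.card ≤ 2 * A.card := by
  have hsplit := card_filter_add_card_filter_not (s := R) (fun r => r % 2 = 0)
  rcases le_total (R.filter fun r => ¬r % 2 = 0).card (R.filter fun r => r % 2 = 0).card with
    h | h
  · refine ⟨R.filter fun r => r % 2 = 0, filter_subset _ R, fun r hr s hs => ?_, by omega⟩
    simp only [mem_filter] at hr hs
    omega
  · refine ⟨R.filter fun r => ¬r % 2 = 0, filter_subset _ R, fun r hr s hs => ?_, by omega⟩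
    simp only [mem_filter] at hr hs
    omega

theorem stmt_4 (S OPT : Finset ℝ) (hsub : OPT ⊆ S)
    (hdisj : ∀ x ∈ OPT, ∀ y ∈ OPT, x ≠ y →
      Set.Icc x (x + 1) ∩ Set.Icc y (y + 1) = ∅)
    (hmax : ∀ T ⊆ S, (∀ x ∈ T, ∀ y ∈ T, x ≠ y →
      Set.Icc x (x + 1) ∩ Set.Icc y (y + 1) = ∅) → T.card ≤ OPT.card)
    (D : ℕ) (hD : D = (S.image (fun x : ℝ => ⌊x⌋)).card) :
    D ≤ 2 * OPT.card ∧ OPT.card ≤ D := by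
  subst hD
  refine ⟨?_, UnitIntervalsDisjoint.card_le_card_image_floor hsub hdisj⟩
  obtain ⟨A, hAS, hApar, hcard⟩ :=
    (S.image fun x : ℝ => ⌊x⌋).exists_subset_mod_two_eq_card_le_two_mul
  obtain ⟨T, hTS, hT, hTA⟩ := exists_unitIntervalsDisjoint_card_eq hAS hApar
  have := hmax T hTS hT
  omega
end

section
/- Keeping one representative unit-length interval per integer slot yields a 2-approximation: if S is a finite set of unit-length intervals and T ⊆ S contains, for each integer r with some interval of S having left endpoint in [r, r+1), exactly one such interval, then T contains a pairwise disjoint subfamily M with |OPT(S)| ≤ 2|M|, where OPT(S) is a maximum pairwise disjoint subset of S. -/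
/-!
Intervals whose left endpoints have the same floor pairwise intersect, so a disjoint family
such as `OPT` has injective floors and hence at most as many members as `T` has (one per
occupied slot). Two intervals of `T` in distinct slots of the same parity are at least two
slots apart and therefore disjoint, so the larger parity class of `T` is a disjoint family
with at least half of its members.
-/

open Set

lemma Icc_unit_inter_nonempty_of_floor_eq {x y : ℝ} (h : ⌊x⌋ = ⌊y⌋) :
    (Icc x (x + 1) ∩ Icc y (y + 1)).Nonempty := by
  have hxy : (⌊x⌋ : ℝ) = ⌊y⌋ := by exact_mod_cast h
  rw [Icc_inter_Icc, nonempty_Icc, max_le_iff, le_min_iff, le_min_iff]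
  refine ⟨⟨by linarith, ?_⟩, ?_, by linarith⟩
  · linarith [Int.lt_floor_add_one x, Int.floor_le y]
  · linarith [Int.lt_floor_add_one y, Int.floor_le x]

lemma Icc_unit_inter_eq_empty_of_floor_add_two_le {x y : ℝ} (h : ⌊x⌋ + 2 ≤ ⌊y⌋) :
    Icc x (x + 1) ∩ Icc y (y + 1) = ∅ := by
  have hxy : (⌊x⌋ : ℝ) + 2 ≤ ⌊y⌋ := by exact_mod_cast h
  have hgap : x + 1 < y := by linarith [Int.lt_floor_add_one x, Int.floor_le y]
  exact eq_empty_iff_forall_notMem.2 fun _ ⟨⟨_, hz⟩, hz', _⟩ ↦ by linarith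

lemma Icc_unit_inter_eq_empty_of_floor_ne_of_emod_two_eq {x y : ℝ} (hne : ⌊x⌋ ≠ ⌊y⌋)
    (hpar : ⌊x⌋ % 2 = ⌊y⌋ % 2) : Icc x (x + 1) ∩ Icc y (y + 1) = ∅ := by
  rcases hne.lt_or_gt with h | h
  · exact Icc_unit_inter_eq_empty_of_floor_add_two_le (by omega)
  · rw [inter_comm]
    exact Icc_unit_inter_eq_empty_of_floor_add_two_le (by omega)

lemma injOn_floor_of_Icc_unit_inter_eq_empty {U : Set ℝ}
    (hdisj : ∀ x ∈ U, ∀ y ∈ U, x ≠ y → Icc x (x + 1) ∩ Icc y (y + 1) = ∅) :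
    InjOn (fun x : ℝ ↦ ⌊x⌋) U := by
  intro x hx y hy h
  by_contra hne
  simpa [hdisj x hx y hy hne] using Icc_unit_inter_nonempty_of_floor_eq h

lemma exists_subset_Icc_unit_disjoint_card_le_two_mul {T : Finset ℝ}
    (hone : InjOn (fun x : ℝ ↦ ⌊x⌋) T) :
    ∃ M ⊆ T, (∀ x ∈ M, ∀ y ∈ M, x ≠ y → Icc x (x + 1) ∩ Icc y (y + 1) = ∅) ∧
      T.card ≤ 2 * M.card := by
  have hclass (r : ℤ) : ∀ x ∈ T.filter (fun x ↦ ⌊x⌋ % 2 = r), ∀ y ∈ T.filter (fun x ↦ ⌊x⌋ % 2 = r),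
      x ≠ y → Icc x (x + 1) ∩ Icc y (y + 1) = ∅ := by
    intro x hx y hy hne
    rw [Finset.mem_filter] at hx hy
    exact Icc_unit_inter_eq_empty_of_floor_ne_of_emod_two_eq
      (fun h ↦ hne (hone hx.1 hy.1 h)) (hx.2.trans hy.2.symm)
  have hsplit := Finset.card_filter_add_card_filter_not (s := T) (fun x ↦ ⌊x⌋ % 2 = 0)
  have hodd : T.filter (fun x ↦ ¬⌊x⌋ % 2 = 0) = T.filter (fun x ↦ ⌊x⌋ % 2 = 1) :=
    Finset.filter_congr fun x _ ↦ by omega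
  rw [hodd] at hsplit
  rcases le_total (T.filter fun x ↦ ⌊x⌋ % 2 = 0).card (T.filter fun x ↦ ⌊x⌋ % 2 = 1).card
    with h | h
  · exact ⟨_, Finset.filter_subset _ _, hclass 1, by omega⟩
  · exact ⟨_, Finset.filter_subset _ _, hclass 0, by omega⟩

theorem stmt_5_general (S T OPT : Finset ℝ)
    (hcover : T.image (fun x : ℝ => ⌊x⌋) = S.image (fun x : ℝ => ⌊x⌋))
    (hone : Set.InjOn (fun x : ℝ => ⌊x⌋) T)
    (hOPTsub : OPT ⊆ S)
    (hOPTdisj : ∀ x ∈ OPT, ∀ y ∈ OPT, x ≠ y →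
      Set.Icc x (x + 1) ∩ Set.Icc y (y + 1) = ∅) :
    ∃ M ⊆ T, (∀ x ∈ M, ∀ y ∈ M, x ≠ y →
      Set.Icc x (x + 1) ∩ Set.Icc y (y + 1) = ∅) ∧
      OPT.card ≤ 2 * M.card := by
  have hOPT_le_T : OPT.card ≤ T.card :=
    calc OPT.card = (OPT.image fun x : ℝ ↦ ⌊x⌋).card :=
          (Finset.card_image_of_injOn (injOn_floor_of_Icc_unit_inter_eq_empty hOPTdisj)).symm
      _ ≤ (S.image fun x : ℝ ↦ ⌊x⌋).card := Finset.card_le_card (Finset.image_subset_image hOPTsub)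
      _ = T.card := by rw [← hcover, Finset.card_image_of_injOn hone]
  obtain ⟨M, hMT, hMdisj, hM⟩ := exists_subset_Icc_unit_disjoint_card_le_two_mul hone
  exact ⟨M, hMT, hMdisj, hOPT_le_T.trans hM⟩

theorem stmt_5 (S T OPT : Finset ℝ) (hTS : T ⊆ S)
    (hcover : T.image (fun x : ℝ => ⌊x⌋) = S.image (fun x : ℝ => ⌊x⌋))
    (hone : Set.InjOn (fun x : ℝ => ⌊x⌋) T)
    (hOPTsub : OPT ⊆ S)
    (hOPTdisj : ∀ x ∈ OPT, ∀ y ∈ OPT, x ≠ y →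
      Set.Icc x (x + 1) ∩ Set.Icc y (y + 1) = ∅)
    (hOPTmax : ∀ U ⊆ S, (∀ x ∈ U, ∀ y ∈ U, x ≠ y →
      Set.Icc x (x + 1) ∩ Set.Icc y (y + 1) = ∅) → U.card ≤ OPT.card) :
    ∃ M ⊆ T, (∀ x ∈ M, ∀ y ∈ M, x ≠ y →
      Set.Icc x (x + 1) ∩ Set.Icc y (y + 1) = ∅) ∧
      OPT.card ≤ 2 * M.card :=
  stmt_5_general S T OPT hcover hone hOPTsub hOPTdisj
end

section
/- Fix an integer n ≥ 1 and a bit vector X ∈ {0,1}^n, and an index J ∈ [n]. Define for i ∈ [n] the interval I_i = [i/(2n+1), 1 + i/(2n+1)] if X[i] = 1, and define the special interval I* = [1 + J/(2n+1) + 1/(2n+1)^2, 2 + J/(2n+1) + 1/(2n+1)^2]. Then among the intervals {I_i : J ≤ i ≤ n, X[i]=1} ∪ {I*}, the maximum pairwise disjoint subset has size 2 if X[J] = 1 and size 1 otherwise (assuming the set is nonempty). -/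
/-!
Two unit intervals `[a, a + 1]`, `[b, b + 1]` are disjoint exactly when `|a - b| > 1`. The
intervals `I i` have left endpoints in `[0, 1]`, so any two of them meet. `I*` starts
`1 + 1/(2n+1)²` after `I J`, so it misses `I J`, but it meets every `I i` with `i > J`, whose left
endpoint is at least `1/(2n+1) ≥ 1/(2n+1)²` further right. So a disjoint subfamily holds at most
one `I i` besides `I*`, and if `X J = false` the whole family is pairwise intersecting.
-/

open Set

theorem Set.Icc_add_disjoint_Icc_add_iff {α : Type*} [AddCommGroup α] [LinearOrder α]
    [IsOrderedAddMonoid α] {a b ℓ : α} :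
    Disjoint (Icc a (a + ℓ)) (Icc b (b + ℓ)) ↔ ℓ < |a - b| := by
  rw [← not_iff_not, not_disjoint_iff, not_lt]
  constructor
  · rintro ⟨x, ⟨hax, hxa⟩, hbx, hxb⟩
    rw [abs_sub_le_iff, sub_le_iff_le_add', sub_le_iff_le_add']
    exact ⟨hax.trans hxb, hbx.trans hxa⟩
  · intro h
    have hℓ : 0 ≤ ℓ := (abs_nonneg _).trans h
    rw [abs_sub_le_iff, sub_le_iff_le_add', sub_le_iff_le_add'] at h
    exact ⟨max a b, ⟨le_max_left a b, max_le (le_add_of_nonneg_right hℓ) h.2⟩,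
      le_max_right a b, max_le h.1 (le_add_of_nonneg_right hℓ)⟩

section ScaledUnitIntervals

variable {c x y : ℝ}

theorem not_disjoint_Icc_div_Icc_div (hx : 0 ≤ x) (hxc : x ≤ c) (hy : 0 ≤ y) (hyc : y ≤ c) :
    ¬Disjoint (Icc (x / c) (1 + x / c)) (Icc (y / c) (1 + y / c)) := by
  rw [add_comm 1, add_comm 1, Icc_add_disjoint_Icc_add_iff, not_lt]
  exact abs_sub_le_of_nonneg_of_le (div_nonneg hx (hx.trans hxc))
    (div_le_one_of_le₀ hxc (hx.trans hxc)) (div_nonneg hy (hy.trans hyc))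
    (div_le_one_of_le₀ hyc (hy.trans hyc))

theorem Icc_two_add_div_add_inv_sq_eq :
    Icc (1 + y / c + 1 / c ^ 2) (2 + y / c + 1 / c ^ 2) =
      Icc (1 + y / c + 1 / c ^ 2) (1 + y / c + 1 / c ^ 2 + 1) := by
  ring_nf

theorem disjoint_Icc_div_Icc_one_add_div_add_inv_sq (hc : c ≠ 0) :
    Disjoint (Icc (y / c) (1 + y / c)) (Icc (1 + y / c + 1 / c ^ 2) (2 + y / c + 1 / c ^ 2)) := by
  rw [Icc_two_add_div_add_inv_sq_eq, add_comm 1 (y / c), Icc_add_disjoint_Icc_add_iff, lt_abs,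
    neg_sub]
  have : 0 < 1 / c ^ 2 := by positivity
  exact Or.inr (by linarith)

theorem not_disjoint_Icc_div_Icc_one_add_div_add_inv_sq (hc : 1 ≤ c) (hy : 0 ≤ y)
    (hyx : y + 1 ≤ x) (hxc : x ≤ c) :
    ¬Disjoint (Icc (x / c) (1 + x / c)) (Icc (1 + y / c + 1 / c ^ 2) (2 + y / c + 1 / c ^ 2)) := by
  rw [Icc_two_add_div_add_inv_sq_eq, add_comm 1 (x / c), Icc_add_disjoint_Icc_add_iff, not_lt,
    abs_sub_le_iff]
  have hc0 : 0 < c := by linarith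
  have hxc' : x / c ≤ 1 := div_le_one_of_le₀ hxc hc0.le
  have hyx' : y / c + 1 / c ≤ x / c := by rw [← add_div]; gcongr
  have hc2 : 1 / c ^ 2 ≤ 1 / c := one_div_le_one_div_of_le hc0 (by nlinarith)
  have : 0 ≤ y / c + 1 / c ^ 2 := by positivity
  constructor <;> linarith

end ScaledUnitIntervals

namespace Finset

variable {α : Type*} {r : α → α → Prop} {G : Set α} {T : Finset α}

theorem card_le_one_of_pairwise_of_pairwise_not (hG : G.Pairwise fun a b => ¬r a b)
    (hTG : ↑T ⊆ G) (hT : (T : Set α).Pairwise r) : T.card ≤ 1 :=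
  card_le_one.mpr fun _ ha _ hb => by_contra fun hab => hG (hTG ha) (hTG hb) hab (hT ha hb hab)

theorem card_le_two_of_pairwise_of_pairwise_not_of_subset_insert [DecidableEq α] {x : α}
    (hG : G.Pairwise fun a b => ¬r a b) (hTG : ↑T ⊆ insert x G) (hT : (T : Set α).Pairwise r) :
    T.card ≤ 2 := by
  have h : (T.erase x).card ≤ 1 :=
    card_le_one_of_pairwise_of_pairwise_not hG
      (fun y hy => by simpa [(mem_erase.mp hy).1] using hTG (mem_of_mem_erase hy))
      (hT.mono (erase_subset x T))
  have := T.pred_card_le_card_erase (a := x)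
  omega

end Finset

theorem Set.exists_finset_pairwise_disjoint_card_eq_two {α : Type*} {F : Set (Set α)}
    {s t : Set α} (hs : s ∈ F) (ht : t ∈ F) (hs₀ : s.Nonempty) (hst : Disjoint s t) :
    ∃ T : Finset (Set α), ↑T ⊆ F ∧ (T : Set (Set α)).Pairwise Disjoint ∧ T.card = 2 := by
  classical
  refine ⟨{s, t}, ?_, ?_, Finset.card_pair (hst.ne hs₀.ne_empty)⟩
  · rw [Finset.coe_pair, insert_subset_iff, singleton_subset_iff]
    exact ⟨hs, ht⟩
  · rw [Finset.coe_pair]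
    exact pairwise_pair.mpr fun _ => ⟨hst, hst.symm⟩

theorem stmt_6_general (n : ℕ) (X : ℕ → Bool) (J : ℕ)
    (hJ : J ∈ Finset.Icc 1 n) :
    let I : ℕ → Set ℝ := fun i =>
      Set.Icc ((i : ℝ) / (2 * n + 1)) (1 + (i : ℝ) / (2 * n + 1))
    let Istar : Set ℝ :=
      Set.Icc (1 + (J : ℝ) / (2 * n + 1) + 1 / (2 * n + 1) ^ 2)
        (2 + (J : ℝ) / (2 * n + 1) + 1 / (2 * n + 1) ^ 2)
    let F : Set (Set ℝ) :=
      {s | ∃ i, J ≤ i ∧ i ≤ n ∧ X i = true ∧ s = I i} ∪ {Istar}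
    (X J = true →
      (∃ T : Finset (Set ℝ), ↑T ⊆ F ∧
        (T : Set (Set ℝ)).Pairwise Disjoint ∧ T.card = 2) ∧
      (∀ T : Finset (Set ℝ), ↑T ⊆ F →
        (T : Set (Set ℝ)).Pairwise Disjoint → T.card ≤ 2)) ∧
    (X J = false →
      (∃ T : Finset (Set ℝ), ↑T ⊆ F ∧
        (T : Set (Set ℝ)).Pairwise Disjoint ∧ T.card = 1) ∧
      (∀ T : Finset (Set ℝ), ↑T ⊆ F →
        (T : Set (Set ℝ)).Pairwise Disjoint → T.card ≤ 1)) := by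
  intro I Istar F
  classical
  have hc : (1 : ℝ) ≤ 2 * n + 1 := by linarith [n.cast_nonneg (α := ℝ)]
  have hle : ∀ {i : ℕ}, i ≤ n → (i : ℝ) ≤ 2 * n + 1 := fun hi => by
    linarith [(Nat.cast_le (α := ℝ)).mpr hi]
  have hII : ∀ {i j}, i ≤ n → j ≤ n → ¬Disjoint (I i) (I j) := fun hi hj =>
    not_disjoint_Icc_div_Icc_div (by positivity) (hle hi) (by positivity) (hle hj)
  have hIIstar : ∀ {i}, J < i → i ≤ n → ¬Disjoint (I i) Istar := fun hJi hi =>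
    not_disjoint_Icc_div_Icc_one_add_div_add_inv_sq hc (by positivity) (by exact_mod_cast hJi)
      (hle hi)
  have hG : {s | ∃ i, J ≤ i ∧ i ≤ n ∧ X i = true ∧ s = I i}.Pairwise
      fun s t => ¬Disjoint s t := by
    rintro _ ⟨i, -, hi, -, rfl⟩ _ ⟨j, -, hj, -, rfl⟩ -
    exact hII hi hj
  refine ⟨fun hXJ => ⟨?_, fun T hTF hT => ?_⟩, fun hXJ => ⟨?_, fun T hTF hT => ?_⟩⟩
  · exact exists_finset_pairwise_disjoint_card_eq_two
      (Or.inl ⟨J, le_rfl, (Finset.mem_Icc.mp hJ).2, hXJ, rfl⟩) (Or.inr rfl)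
      (nonempty_Icc.mpr (by linarith)) (disjoint_Icc_div_Icc_one_add_div_add_inv_sq (by positivity))
  · exact Finset.card_le_two_of_pairwise_of_pairwise_not_of_subset_insert hG
      (hTF.trans union_singleton.le) hT
  · exact ⟨{Istar}, by simp [F], by simp, rfl⟩
  · have hlt : ∀ {i}, J ≤ i → X i = true → J < i := fun hJi hXi =>
      hJi.lt_of_ne (by rintro rfl; simp [hXJ] at hXi)
    refine Finset.card_le_one_of_pairwise_of_pairwise_not ?_ hTF hT
    rintro _ (⟨i, hJi, hi, hXi, rfl⟩ | rfl) _ (⟨j, hJj, hj, hXj, rfl⟩ | rfl) hst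
    · exact hII hi hj
    · exact hIIstar (hlt hJi hXi) hi
    · exact fun h => hIIstar (hlt hJj hXj) hj h.symm
    · exact (hst rfl).elim

theorem stmt_6 (n : ℕ) (hn : 1 ≤ n) (X : ℕ → Bool) (J : ℕ)
    (hJ : J ∈ Finset.Icc 1 n) :
    let I : ℕ → Set ℝ := fun i =>
      Set.Icc ((i : ℝ) / (2 * n + 1)) (1 + (i : ℝ) / (2 * n + 1))
    let Istar : Set ℝ :=
      Set.Icc (1 + (J : ℝ) / (2 * n + 1) + 1 / (2 * n + 1) ^ 2)
        (2 + (J : ℝ) / (2 * n + 1) + 1 / (2 * n + 1) ^ 2)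
    let F : Set (Set ℝ) :=
      {s | ∃ i, J ≤ i ∧ i ≤ n ∧ X i = true ∧ s = I i} ∪ {Istar}
    (X J = true →
      (∃ T : Finset (Set ℝ), ↑T ⊆ F ∧
        (T : Set (Set ℝ)).Pairwise Disjoint ∧ T.card = 2) ∧
      (∀ T : Finset (Set ℝ), ↑T ⊆ F →
        (T : Set (Set ℝ)).Pairwise Disjoint → T.card ≤ 2)) ∧
    (X J = false →
      (∃ T : Finset (Set ℝ), ↑T ⊆ F ∧
        (T : Set (Set ℝ)).Pairwise Disjoint ∧ T.card = 1) ∧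
      (∀ T : Finset (Set ℝ), ↑T ⊆ F →
        (T : Set (Set ℝ)).Pairwise Disjoint → T.card ≤ 1)) :=
  stmt_6_general n X J hJ
end

section
/- Let n ≥ 1, and for i ∈ [n] with X_1[i] = 1 define I_1(i) = [i/(3n), 1 + i/(3n)], and with X_2[i] = 1 define I_2(i) = [2 − i/(3n), 3 − i/(3n)]. For j ∈ [n] with X_2'[j] = 1 define I_3(j) = [1 + J_1/(3n) + 1/(6n) + (j−1)/(6n²), 2 − J_1/(3n) − 1/(6n) + (j−1)/(6n²)] where J_1 ∈ [n]. Then for any k, j ∈ [n], the interval I_3(j) is disjoint from both I_1(k) and I_2(k) if and only if k ≤ J_1 (assuming n ≥ 2 and j ≤ n). -/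
theorem stmt_16 (n : ℕ) (hn : 2 ≤ n) (J₁ : ℕ) (hJ₁ : J₁ ∈ Finset.Icc 1 n)
    (k j : ℕ) (hk : k ∈ Finset.Icc 1 n) (hj : j ∈ Finset.Icc 1 n) :
    let I₁ : ℕ → Set ℝ := fun i =>
      Set.Icc ((i : ℝ) / (3 * n)) (1 + (i : ℝ) / (3 * n))
    let I₂ : ℕ → Set ℝ := fun i =>
      Set.Icc (2 - (i : ℝ) / (3 * n)) (3 - (i : ℝ) / (3 * n))
    let I₃ : ℕ → Set ℝ := fun i =>
      Set.Icc (1 + (J₁ : ℝ) / (3 * n) + 1 / (6 * n) + ((i : ℝ) - 1) / (6 * n ^ 2))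
        (2 - (J₁ : ℝ) / (3 * n) - 1 / (6 * n) + ((i : ℝ) - 1) / (6 * n ^ 2))
    (Disjoint (I₃ j) (I₁ k) ∧ Disjoint (I₃ j) (I₂ k)) ↔ k ≤ J₁ := by
  intro I₁ I₂ I₃
  simp only [Finset.mem_Icc] at hJ₁ hk hj
  have hn2 : (2 : ℝ) ≤ n := by exact_mod_cast hn
  have hn0 : (0 : ℝ) < n := by linarith
  have hne : (n : ℝ) ≠ 0 := ne_of_gt hn0
  have hJ1 : (1 : ℝ) ≤ J₁ := by exact_mod_cast hJ₁.1
  have hJn : (J₁ : ℝ) ≤ n := by exact_mod_cast hJ₁.2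
  have hk1 : (1 : ℝ) ≤ k := by exact_mod_cast hk.1
  have hkn : (k : ℝ) ≤ n := by exact_mod_cast hk.2
  have hj1 : (1 : ℝ) ≤ j := by exact_mod_cast hj.1
  have hjn : (j : ℝ) ≤ n := by exact_mod_cast hj.2
  set a : ℝ := 1 / (6 * (n : ℝ) ^ 2) with ha_def
  have ha : 0 < a := by positivity
  have ha6 : a * (6 * (n : ℝ) ^ 2) = 1 := by rw [ha_def]; field_simp
  have e1 : ∀ x : ℝ, x / (3 * (n : ℝ)) = x * (2 * n) * a := by
    intro x; rw [ha_def]; field_simp; ring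
  have e2 : (1 : ℝ) / (6 * (n : ℝ)) = n * a := by
    rw [ha_def]; field_simp
  have e3 : ∀ x : ℝ, x / (6 * (n : ℝ) ^ 2) = x * a := by
    intro x; rw [ha_def]; field_simp
  simp only [I₁, I₂, I₃, Set.disjoint_iff_inter_eq_empty, Set.Icc_inter_Icc,
    Set.Icc_eq_empty_iff, not_le, min_lt_iff, lt_max_iff, e1, e2, e3]
  constructor
  · rintro ⟨-, h2⟩
    by_contra hc
    push_neg at hc
    have hc' : (J₁ : ℝ) + 1 ≤ k := by exact_mod_cast hc
    rcases h2 with (h | h) | (h | h)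
    · nlinarith [mul_pos hn0 ha, mul_le_mul_of_nonneg_right hJn (le_of_lt ha),
        mul_le_mul_of_nonneg_right hn2 (le_of_lt (mul_pos hn0 ha))]
    · nlinarith [mul_pos hn0 ha, mul_le_mul_of_nonneg_right hJn (le_of_lt ha),
        mul_le_mul_of_nonneg_right hkn (le_of_lt ha),
        mul_le_mul_of_nonneg_right hjn (le_of_lt ha),
        mul_le_mul_of_nonneg_right hn2 (le_of_lt (mul_pos hn0 ha))]
    · nlinarith [mul_pos hn0 ha, mul_nonneg (by linarith : (0:ℝ) ≤ (j:ℝ) - 1) (le_of_lt ha),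
        mul_le_mul_of_nonneg_right hc' (le_of_lt (mul_pos (by linarith : (0:ℝ) < 2*(n:ℝ)) ha))]
    · linarith
  · intro hle
    have hle' : (k : ℝ) ≤ J₁ := by exact_mod_cast hle
    have key : ((k : ℝ)) * (2 * n) * a ≤ (J₁ : ℝ) * (2 * n) * a :=
      mul_le_mul_of_nonneg_right (mul_le_mul_of_nonneg_right hle' (by linarith)) (le_of_lt ha)
    have hja : ((j : ℝ) - 1) * a < (n : ℝ) * a := by
      have : (j : ℝ) - 1 < n := by linarith
      exact mul_lt_mul_of_pos_right this ha
    constructor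
    · exact Or.inl (Or.inr (by nlinarith [mul_pos hn0 ha]))
    · exact Or.inr (Or.inl (by nlinarith [mul_pos hn0 ha]))
end
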